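/- For every k ≥ 0, E[Φₖ] = e^{λkt}(φ + 1) − 1. -/

import Mathlib

/-!
The update `j(t, φ, z) = A(z) φ + B(z)` is affine in `φ`, and `Z_{k+1}` is independent of `Φ_k`
because `Φ_k` is `F_k`-measurable. So `E[Φ_{k+1}] = E[A(Z)] E[Φ_k] + E[B(Z)]` for `Z ~ N(0, 1)`.
Both means come from the Gaussian moment generating function `E[e^{cZ}] = e^{c²/2}`: directly
`E[A(Z)] = e^{λt}`, and for `B` one swaps the `u`- and `z`-integrals, where
`E[e^{(αu/√t) Z}] = e^{α²u²/(2t)}` cancels the quadratic term of the exponent and leaves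
`∫₀ᵗ λ e^{λu} du = e^{λt} - 1`. Hence `E[Φ_{k+1}] + 1 = e^{λt} (E[Φ_k] + 1)`.
-/

open MeasureTheory Real

/-- Standard Gaussian density on ℝ. -/
noncomputable def gaussDensity (z : ℝ) : ℝ := Real.exp (-z ^ 2 / 2) / Real.sqrt (2 * Real.pi)

/-- One-step update of the conditional odds process upon observing a normalized
increment `z` after a waiting time `t`, starting from odds `φ`. -/
noncomputable def jfun (lam alp t φ z : ℝ) : ℝ :=
  Real.exp (alp * z * Real.sqrt t + (lam - alp ^ 2 / 2) * t) * φ +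
    ∫ u in (0:ℝ)..t, lam * Real.exp ((lam + alp * z / Real.sqrt t) * u - alp ^ 2 * u ^ 2 / (2 * t))


/-- The discretely observed odds chain: `Φ₀ = φ` and `Φₖ = j(t, Φₖ₋₁, Zₖ)`. -/
noncomputable def oddsChain {Ω : Type*} (lam alp t φ : ℝ) (Z : ℕ → Ω → ℝ) : ℕ → Ω → ℝ
  | 0 => fun _ => φ
  | k + 1 => fun ω => jfun lam alp t (oddsChain lam alp t φ Z k ω) (Z (k + 1) ω)

/-- The filtration `Fₖ = σ(Z₁, …, Zₖ)` generated by the first `k` observations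
(`F₀` is trivial). -/
def obsFiltration {Ω : Type*} (Z : ℕ → Ω → ℝ) (k : ℕ) : MeasurableSpace Ω :=
  ⨆ i ∈ Set.Icc 1 k, MeasurableSpace.comap (Z i) inferInstance

open ProbabilityTheory Function

lemma integral_exp_mul_gaussianReal (m : ℝ) (v : NNReal) (c : ℝ) :
    ∫ x, exp (c * x) ∂gaussianReal m v = exp (m * c + v * c ^ 2 / 2) :=
  congrFun mgf_fun_id_gaussianReal c

namespace jfun

section Coefficients

variable (lam alp t : ℝ)

noncomputable def slope (z : ℝ) : ℝ := exp (alp * z * √t + (lam - alp ^ 2 / 2) * t)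

noncomputable def kernel (z u : ℝ) : ℝ :=
  exp ((lam + alp * z / √t) * u - alp ^ 2 * u ^ 2 / (2 * t))

noncomputable def intercept (z : ℝ) : ℝ := ∫ u in (0:ℝ)..t, lam * kernel lam alp t z u

lemma eq_slope_mul_add_intercept (φ z : ℝ) :
    jfun lam alp t φ z = slope lam alp t z * φ + intercept lam alp t z := rfl

lemma continuous_slope : Continuous (slope lam alp t) := by
  unfold slope; fun_prop

lemma continuous_intercept : Continuous (intercept lam alp t) :=
  intervalIntegral.continuous_parametric_intervalIntegral_of_continuous'
    (by unfold kernel; fun_prop) _ _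

lemma continuous_uncurry : Continuous (uncurry (jfun lam alp t)) := by
  simp_rw [uncurry_def, eq_slope_mul_add_intercept]
  exact ((continuous_slope lam alp t).comp continuous_snd).mul continuous_fst |>.add
    ((continuous_intercept lam alp t).comp continuous_snd)

lemma slope_eq (z : ℝ) :
    slope lam alp t z = exp ((lam - alp ^ 2 / 2) * t) * exp (alp * √t * z) := by
  rw [slope, ← exp_add]; ring_nf

lemma kernel_eq (z u : ℝ) :
    kernel lam alp t z u = exp (lam * u - alp ^ 2 * u ^ 2 / (2 * t)) * exp (alp * u / √t * z) := by
  rw [kernel, ← exp_add]; ring_nf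

lemma integrable_slope_gaussianReal : Integrable (slope lam alp t) (gaussianReal 0 1) := by
  rw [funext (slope_eq lam alp t)]
  exact (integrable_exp_mul_gaussianReal _).const_mul _

lemma integrable_kernel_gaussianReal (u : ℝ) :
    Integrable (fun z ↦ kernel lam alp t z u) (gaussianReal 0 1) := by
  simp_rw [kernel_eq]
  exact (integrable_exp_mul_gaussianReal _).const_mul _

variable {t}

lemma integral_slope_gaussianReal (ht : 0 ≤ t) :
    ∫ z, slope lam alp t z ∂gaussianReal 0 1 = exp (lam * t) := by
  simp_rw [slope_eq, integral_const_mul, integral_exp_mul_gaussianReal, NNReal.coe_one,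
    ← exp_add, mul_pow, sq_sqrt ht]
  ring_nf

lemma integral_kernel_gaussianReal (ht : 0 ≤ t) (u : ℝ) :
    ∫ z, kernel lam alp t z u ∂gaussianReal 0 1 = exp (lam * u) := by
  simp_rw [kernel_eq, integral_const_mul, integral_exp_mul_gaussianReal, NNReal.coe_one,
    ← exp_add, div_pow, mul_pow, sq_sqrt ht]
  ring_nf

lemma integrable_uncurry_kernel (ht : 0 ≤ t) :
    Integrable (uncurry (kernel lam alp t))
      ((gaussianReal 0 1).prod (volume.restrict (Set.Ioc 0 t))) := by
  refine (integrable_prod_iff' (Continuous.aestronglyMeasurable (by unfold kernel; fun_prop))).2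
    ⟨.of_forall (integrable_kernel_gaussianReal lam alp t), ?_⟩
  have hnorm (z u : ℝ) : ‖kernel lam alp t z u‖ = kernel lam alp t z u :=
    norm_of_nonneg (exp_pos _).le
  simp_rw [uncurry_apply_pair, hnorm, integral_kernel_gaussianReal lam alp ht]
  exact (continuous_exp.comp (continuous_const_mul lam)).integrableOn_Ioc

lemma intercept_eq (ht : 0 ≤ t) (z : ℝ) :
    intercept lam alp t z = lam * ∫ u in Set.Ioc 0 t, kernel lam alp t z u := by
  rw [intercept, intervalIntegral.integral_const_mul, intervalIntegral.integral_of_le ht]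

lemma integrable_intercept_gaussianReal (ht : 0 ≤ t) :
    Integrable (intercept lam alp t) (gaussianReal 0 1) := by
  rw [funext (intercept_eq lam alp ht)]
  exact (integrable_uncurry_kernel lam alp ht).integral_prod_left.const_mul lam

lemma integral_intercept_gaussianReal (ht : 0 ≤ t) :
    ∫ z, intercept lam alp t z ∂gaussianReal 0 1 = exp (lam * t) - 1 := by
  have hderiv (u : ℝ) : HasDerivAt (fun v ↦ exp (lam * v)) (lam * exp (lam * u)) u := by
    simpa [mul_comm] using ((hasDerivAt_id u).const_mul lam).exp
  calc ∫ z, intercept lam alp t z ∂gaussianReal 0 1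
      = lam * ∫ u in Set.Ioc 0 t, ∫ z, kernel lam alp t z u ∂gaussianReal 0 1 := by
        simp_rw [intercept_eq lam alp ht, integral_const_mul,
          integral_integral_swap (integrable_uncurry_kernel lam alp ht)]
    _ = ∫ u in (0)..t, lam * exp (lam * u) := by
        simp_rw [integral_kernel_gaussianReal lam alp ht, intervalIntegral.integral_of_le ht,
          integral_const_mul]
    _ = exp (lam * t) - 1 := by
        rw [intervalIntegral.integral_eq_sub_of_hasDerivAt (fun u _ ↦ hderiv u)
          (by apply Continuous.intervalIntegrable; fun_prop)]
        simp

end Coefficients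

section OfGaussian

variable {Ω : Type*} [MeasurableSpace Ω] {μ : Measure Ω} {lam alp t : ℝ} {X Z : Ω → ℝ}

lemma integrable_slope_comp (hZ : μ.map Z = gaussianReal 0 1) :
    Integrable (fun ω ↦ slope lam alp t (Z ω)) μ :=
  (hZ ▸ integrable_slope_gaussianReal lam alp t).comp_aemeasurable
    (aemeasurable_of_map_neZero (by rw [hZ]; infer_instance))

lemma integrable_intercept_comp (ht : 0 ≤ t) (hZ : μ.map Z = gaussianReal 0 1) :
    Integrable (fun ω ↦ intercept lam alp t (Z ω)) μ :=
  (hZ ▸ integrable_intercept_gaussianReal lam alp ht).comp_aemeasurable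
    (aemeasurable_of_map_neZero (by rw [hZ]; infer_instance))

lemma indepFun_slope_comp (hXZ : X ⟂ᵢ[μ] Z) : (fun ω ↦ slope lam alp t (Z ω)) ⟂ᵢ[μ] X :=
  hXZ.symm.comp (continuous_slope lam alp t).measurable measurable_id

end OfGaussian

end jfun

section Step

variable {Ω : Type*} [MeasurableSpace Ω] {μ : Measure Ω} {lam alp t : ℝ} {X Z : Ω → ℝ}

lemma integrable_jfun_of_indepFun (ht : 0 ≤ t) (hZ : μ.map Z = gaussianReal 0 1)
    (hXZ : X ⟂ᵢ[μ] Z) (hX : Integrable X μ) :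
    Integrable (fun ω ↦ jfun lam alp t (X ω) (Z ω)) μ :=
  ((jfun.indepFun_slope_comp hXZ).integrable_mul (jfun.integrable_slope_comp hZ) hX).add
    (jfun.integrable_intercept_comp ht hZ)

lemma integral_jfun_of_indepFun (ht : 0 ≤ t) (hZ : μ.map Z = gaussianReal 0 1)
    (hXZ : X ⟂ᵢ[μ] Z) (hX : Integrable X μ) :
    ∫ ω, jfun lam alp t (X ω) (Z ω) ∂μ = exp (lam * t) * (∫ ω, X ω ∂μ + 1) - 1 := by
  have hZm : AEMeasurable Z μ := aemeasurable_of_map_neZero (by rw [hZ]; infer_instance)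
  have hslope : ∫ ω, jfun.slope lam alp t (Z ω) ∂μ = exp (lam * t) := by
    rw [← integral_map hZm (jfun.continuous_slope lam alp t).aestronglyMeasurable, hZ,
      jfun.integral_slope_gaussianReal lam alp ht]
  have hintercept : ∫ ω, jfun.intercept lam alp t (Z ω) ∂μ = exp (lam * t) - 1 := by
    rw [← integral_map hZm (jfun.continuous_intercept lam alp t).aestronglyMeasurable, hZ,
      jfun.integral_intercept_gaussianReal lam alp ht]
  have hindep : (fun ω ↦ jfun.slope lam alp t (Z ω)) ⟂ᵢ[μ] X := jfun.indepFun_slope_comp hXZ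
  have hprod : Integrable (fun ω ↦ jfun.slope lam alp t (Z ω) * X ω) μ :=
    hindep.integrable_mul (jfun.integrable_slope_comp hZ) hX
  simp_rw [jfun.eq_slope_mul_add_intercept]
  rw [integral_add hprod (jfun.integrable_intercept_comp ht hZ),
    hindep.integral_fun_mul_eq_mul_integral (jfun.integrable_slope_comp hZ).aestronglyMeasurable
      hX.aestronglyMeasurable, hslope, hintercept]
  ring

end Step

section Chain

variable {Ω : Type*}

lemma obsFiltration_mono (Z : ℕ → Ω → ℝ) {k l : ℕ} (hkl : k ≤ l) :
    obsFiltration Z k ≤ obsFiltration Z l :=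
  biSup_mono fun _ hi ↦ ⟨hi.1, hi.2.trans hkl⟩

lemma measurable_obsFiltration (Z : ℕ → Ω → ℝ) {i k : ℕ} (hi : 1 ≤ i) (hik : i ≤ k) :
    Measurable[obsFiltration Z k] (Z i) :=
  (comap_measurable (Z i)).mono (le_iSup₂ (f := fun j (_ : j ∈ Set.Icc 1 k) ↦
    MeasurableSpace.comap (Z j) inferInstance) i ⟨hi, hik⟩) le_rfl

lemma measurable_oddsChain (lam alp t φ : ℝ) (Z : ℕ → Ω → ℝ) (k : ℕ) :
    Measurable[obsFiltration Z k] (oddsChain lam alp t φ Z k) := by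
  induction k with
  | zero => exact measurable_const
  | succ k ih =>
    exact (jfun.continuous_uncurry lam alp t).measurable.comp
      ((ih.mono (obsFiltration_mono Z k.le_succ) le_rfl).prodMk
        (measurable_obsFiltration Z k.succ_pos le_rfl))

variable [MeasurableSpace Ω] {μ : Measure Ω} {Z : ℕ → Ω → ℝ}

lemma indep_obsFiltration_comap_succ (hZmeas : ∀ k, Measurable (Z k))
    (hZindep : iIndepFun Z μ) (k : ℕ) :
    Indep (obsFiltration Z k) (MeasurableSpace.comap (Z (k + 1)) inferInstance) μ := by
  have h := indep_iSup_of_disjoint (fun i ↦ (hZmeas i).comap_le) hZindep.iIndep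
    (S := Set.Icc 1 k) (T := {k + 1}) (by simp)
  simpa [obsFiltration] using h

lemma indepFun_oddsChain_succ (lam alp t φ : ℝ) (hZmeas : ∀ k, Measurable (Z k))
    (hZindep : iIndepFun Z μ) (k : ℕ) :
    oddsChain lam alp t φ Z k ⟂ᵢ[μ] Z (k + 1) :=
  (IndepFun_iff_Indep _ _ _).2 <| indep_of_indep_of_le_left
    (indep_obsFiltration_comap_succ hZmeas hZindep k)
    (measurable_oddsChain lam alp t φ Z k).comap_le

lemma integrable_oddsChain [IsProbabilityMeasure μ] {lam alp t : ℝ} (ht : 0 ≤ t) (φ : ℝ)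
    (hZmeas : ∀ k, Measurable (Z k)) (hZdist : ∀ k, 1 ≤ k → μ.map (Z k) = gaussianReal 0 1)
    (hZindep : iIndepFun Z μ) (k : ℕ) :
    Integrable (oddsChain lam alp t φ Z k) μ := by
  induction k with
  | zero => exact integrable_const φ
  | succ k ih =>
    exact integrable_jfun_of_indepFun ht (hZdist _ k.succ_pos)
      (indepFun_oddsChain_succ lam alp t φ hZmeas hZindep k) ih

end Chain

theorem oddsChain_mean_general (lam alp t : ℝ) (ht : 0 < t)
    {Ω : Type*} [MeasurableSpace Ω] (μ : MeasureTheory.Measure Ω) [IsProbabilityMeasure μ]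
    (Z : ℕ → Ω → ℝ) (hZmeas : ∀ k, Measurable (Z k))
    (hZdist : ∀ k, 1 ≤ k → μ.map (Z k) = ProbabilityTheory.gaussianReal 0 1)
    (hZindep : ProbabilityTheory.iIndepFun Z μ)
    (φ : ℝ) :
    ∀ k : ℕ, ∫ ω, oddsChain lam alp t φ Z k ω ∂μ =
      Real.exp (lam * k * t) * (φ + 1) - 1 := by
  intro k
  induction k with
  | zero => simp [oddsChain]
  | succ k ih =>
    simp only [oddsChain]
    rw [integral_jfun_of_indepFun ht.le (hZdist _ k.succ_pos)
      (indepFun_oddsChain_succ lam alp t φ hZmeas hZindep k)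
      (integrable_oddsChain ht.le φ hZmeas hZdist hZindep k), ih, sub_add_cancel, ← mul_assoc,
      ← exp_add]
    push_cast
    ring_nf

/-- Mean of the odds chain: `E[Φₖ] = e^{λkt}(φ + 1) − 1` for every `k ≥ 0`. -/
theorem oddsChain_mean (lam alp t : ℝ) (hlam : 0 < lam) (halp : 0 < alp) (ht : 0 < t)
    {Ω : Type*} [MeasurableSpace Ω] (μ : MeasureTheory.Measure Ω) [IsProbabilityMeasure μ]
    (Z : ℕ → Ω → ℝ) (hZmeas : ∀ k, Measurable (Z k))
    (hZdist : ∀ k, 1 ≤ k → μ.map (Z k) = ProbabilityTheory.gaussianReal 0 1)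
    (hZindep : ProbabilityTheory.iIndepFun Z μ)
    (φ : ℝ) (hφ : 0 ≤ φ) :
    ∀ k : ℕ, ∫ ω, oddsChain lam alp t φ Z k ω ∂μ =
      Real.exp (lam * k * t) * (φ + 1) - 1 :=
  oddsChain_mean_general lam alp t ht μ Z hZmeas hZdist hZindep φ
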